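/- Let θ₀ ∈ [0, π/2) and let c : ℤ → ℂ satisfy: for every n ≥ 1 both c_n + c_{−n} and c_n − c_{−n} lie in K(θ₀); and condition (2*): there exist a natural number N₀ and M > 0 such that ∑_{k=m}^{2m} |c_k − c_{k+1}| ≤ M · max_{m ≤ k < m+N₀} |c_k| for all m ≥ 1. Then there is a constant C > 0 depending only on M, N₀ and θ₀ such that for all n ≥ N₀, ∑_{k=n+1}^{4n} Re(c_k) ≥ C^{−1} · (n/N₀) · |c_{2n}|. -/

import Mathlib

open Filter Finset

lemma sector_re (θ₀ : ℝ) (hθ₀ : 0 ≤ θ₀) (hθ₁ : θ₀ < Real.pi / 2)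
    (z : ℂ) (hz : |z.arg| ≤ θ₀) : Real.cos θ₀ * ‖z‖ ≤ z.re := by
  rw [← Complex.norm_mul_cos_arg z]
  have h1 : Real.cos θ₀ ≤ Real.cos z.arg := by
    rw [← Real.cos_abs z.arg]
    exact Real.cos_le_cos_of_nonneg_of_le_pi (abs_nonneg _)
      (by linarith [Real.pi_pos]) hz
  nlinarith [norm_nonneg z]

lemma re_ge (c : ℤ → ℂ) (θ₀ : ℝ) (hθ₀ : 0 ≤ θ₀) (hθ₁ : θ₀ < Real.pi / 2)
    (h4 : ∀ n : ℤ, 1 ≤ n →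
      |(c n + c (-n)).arg| ≤ θ₀ ∧ |(c n - c (-n)).arg| ≤ θ₀)
    (n : ℤ) (hn : 1 ≤ n) : Real.cos θ₀ * ‖c n‖ ≤ (c n).re := by
  obtain ⟨ha, hb⟩ := h4 n hn
  have h1 := sector_re θ₀ hθ₀ hθ₁ _ ha
  have h2 := sector_re θ₀ hθ₀ hθ₁ _ hb
  have hsum : 2 * ‖c n‖ ≤
      ‖c n + c (-n)‖ + ‖c n - c (-n)‖ := by
    have := norm_add_le (c n + c (-n)) (c n - c (-n))
    have h2n : (c n + c (-n)) + (c n - c (-n)) = 2 * c n := by ring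
    rw [h2n] at this
    simpa [map_mul] using this
  have hre : (c n + c (-n)).re + (c n - c (-n)).re = 2 * (c n).re := by
    simp [Complex.add_re, Complex.sub_re]; ring
  have hcos : 0 ≤ Real.cos θ₀ :=
    Real.cos_nonneg_of_mem_Icc ⟨by linarith [Real.pi_pos], by linarith⟩
  have := mul_le_mul_of_nonneg_left hsum hcos
  linarith

lemma telescope (c : ℤ → ℂ) : ∀ a b : ℕ, a ≤ b →
    ‖c (b : ℤ) - c (a : ℤ)‖ ≤
      ∑ j ∈ Finset.Ico a b, ‖c (j : ℤ) - c ((j : ℤ) + 1)‖ := by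
  intro a b hab
  induction b, hab using Nat.le_induction with
  | base => simp
  | succ b hab ih =>
    rw [Finset.sum_Ico_succ_top hab]
    have key : ‖c ((b + 1 : ℕ) : ℤ) - c (a : ℤ)‖ ≤
        ‖c (b : ℤ) - c (a : ℤ)‖ +
        ‖c (b : ℤ) - c ((b : ℤ) + 1)‖ := by
      have hcast : ((b + 1 : ℕ) : ℤ) = (b : ℤ) + 1 := by push_cast; ring
      rw [hcast]
      have h2 := norm_sub_le_norm_sub_add_norm_sub (c ((b : ℤ) + 1)) (c (b : ℤ)) (c (a : ℤ))
      have h3 : ‖c ((b : ℤ) + 1) - c (b : ℤ)‖ =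
          ‖c (b : ℤ) - c ((b : ℤ) + 1)‖ := norm_sub_rev _ _
      linarith
    linarith
  
lemma block_sum (f : ℕ → ℝ) (hf : ∀ k, 0 ≤ f k) (a N₀ : ℕ) (B : ℝ) :
    ∀ t : ℕ, (∀ i, i < t → ∃ k, k ∈ Finset.Ico (a + i * N₀) (a + i * N₀ + N₀) ∧ B ≤ f k) →
    (t : ℝ) * B ≤ ∑ k ∈ Finset.Ico a (a + t * N₀), f k := by
  intro t
  induction t with
  | zero => simp
  | succ t ih =>
    intro h
    have h1 : a ≤ a + t * N₀ := by omega
    have h2 : a + t * N₀ ≤ a + (t + 1) * N₀ := by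
      have : t * N₀ ≤ (t+1) * N₀ := Nat.mul_le_mul_right _ (by omega)
      omega
    rw [← Finset.sum_Ico_consecutive _ h1 h2]
    obtain ⟨k, hk, hB⟩ := h t (by omega)
    have hsub : (Finset.Ico (a + t * N₀) (a + t * N₀ + N₀)) =
        Finset.Ico (a + t * N₀) (a + (t+1) * N₀) := by
      congr 1; ring
    rw [hsub] at hk
    have hsingle : B ≤ ∑ k ∈ Finset.Ico (a + t * N₀) (a + (t+1) * N₀), f k :=
      le_trans hB (Finset.single_le_sum (fun i _ => hf i) hk)
    have := ih (fun i hi => h i (by omega))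
    push_cast
    linarith

/-- The key lower bound in the proof of Lemma 2 of the paper: under the sector
condition (4) and condition (2*), there is a constant `C > 0` (depending only on
`M`, `N₀` and `θ₀`) such that `∑_{k=n+1}^{4n} Re(c_k) ≥ C⁻¹·(n/N₀)·|c_{2n}|`
for all `n ≥ N₀`. -/
theorem lemma2_lower_bound (c : ℤ → ℂ) (θ₀ : ℝ) (hθ₀ : 0 ≤ θ₀) (hθ₁ : θ₀ < Real.pi / 2)
    (h4 : ∀ n : ℤ, 1 ≤ n →
      |(c n + c (-n)).arg| ≤ θ₀ ∧ |(c n - c (-n)).arg| ≤ θ₀)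
    (N₀ : ℕ) (hN₀ : 1 ≤ N₀) (M : ℝ) (hM : 0 < M)
    (h2star : ∀ m : ℕ, 1 ≤ m →
      ∑ k ∈ Finset.Icc m (2 * m), ‖c (k : ℤ) - c ((k : ℤ) + 1)‖ ≤
        M * (Finset.Ico m (m + N₀)).sup' (Finset.nonempty_Ico.mpr (by omega))
          (fun k => ‖c (k : ℤ)‖)) :
    ∃ C : ℝ, 0 < C ∧ ∀ n : ℕ, N₀ ≤ n →
      C⁻¹ * ((n : ℝ) / N₀) * ‖c ((2 * n : ℕ) : ℤ)‖ ≤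
        ∑ k ∈ Finset.Icc (n + 1) (4 * n), (c (k : ℤ)).re := by
  have hcos : 0 < Real.cos θ₀ := Real.cos_pos_of_mem_Ioo ⟨by linarith [Real.pi_pos], hθ₁⟩
  have hM1 : (0:ℝ) < 1 + M := by linarith
  refine ⟨2 * (1 + M) / Real.cos θ₀, by positivity, ?_⟩
  intro n hn
  set t := n / N₀ with ht
  have hN₀pos : 0 < N₀ := hN₀
  have htN : t * N₀ ≤ n := Nat.div_mul_le_self n N₀
  have ht1 : 1 ≤ t := (Nat.one_le_div_iff hN₀pos).mpr hn
  have hmod := Nat.div_add_mod n N₀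
  have hmodlt := Nat.mod_lt n hN₀pos
  rw [← ht] at hmod
  have hn2t : n ≤ 2 * t * N₀ := by nlinarith [hmod, hmodlt, ht1]
  set B : ℝ := ‖c ((2 * n : ℕ) : ℤ)‖ / (1 + M) with hB
  have hBnonneg : 0 ≤ B := by positivity
  -- block bound
  have hblock : ∀ i, i < t → ∃ k, k ∈ Finset.Ico ((n+1) + i * N₀) ((n+1) + i * N₀ + N₀) ∧
      B ≤ ‖c (k : ℤ)‖ := by
    intro i hi
    set m := (n + 1) + i * N₀ with hm
    have hm1 : 1 ≤ m := by omega
    obtain ⟨k, hk, hsup⟩ := Finset.exists_mem_eq_sup' (Finset.nonempty_Ico.mpr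
      (show m < m + N₀ by omega)) (fun k => ‖c (k : ℤ)‖)
    have hkm : m ≤ k ∧ k < m + N₀ := Finset.mem_Ico.mp hk
    have hkle : k ≤ 2 * n := by
      have hiN : i * N₀ + N₀ ≤ t * N₀ := by
        have h := Nat.mul_le_mul_right N₀ (show i + 1 ≤ t by omega)
        rw [add_mul, one_mul] at h
        linarith
      have h2 := hkm.2
      have hlt : k < 2 * n + 1 := by
        rw [hm] at h2
        linarith
      omega
    have h2s := h2star m hm1
    rw [hsup] at h2s
    have htel := telescope c k (2 * n) hkle
    have hsub : Finset.Ico k (2 * n) ⊆ Finset.Icc m (2 * m) := by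
      intro j hj
      rw [Finset.mem_Ico] at hj
      rw [Finset.mem_Icc]
      omega
    have htel2 : ∑ j ∈ Finset.Ico k (2*n), ‖c (j : ℤ) - c ((j : ℤ) + 1)‖ ≤
        ∑ j ∈ Finset.Icc m (2*m), ‖c (j : ℤ) - c ((j : ℤ) + 1)‖ :=
      Finset.sum_le_sum_of_subset_of_nonneg hsub (fun _ _ _ => norm_nonneg _)
    have habs : ‖c ((2 * n : ℕ) : ℤ)‖ ≤ (1 + M) * ‖c (k : ℤ)‖ := by
      have h5 : ‖c ((2*n : ℕ) : ℤ)‖ ≤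
          ‖c (k : ℤ)‖ + ‖c ((2*n : ℕ) : ℤ) - c (k : ℤ)‖ := by
        have := norm_add_le (c (k:ℤ)) (c ((2*n:ℕ):ℤ) - c (k:ℤ))
        simpa using this
      linarith
    refine ⟨k, hk, ?_⟩
    rw [hB, div_le_iff₀ hM1]
    linarith [habs]
  have hbsum := block_sum (fun k => ‖c (k : ℤ)‖) (fun k => norm_nonneg _)
    (n + 1) N₀ B t hblock
  -- sums
  have hsub2 : Finset.Ico (n + 1) ((n + 1) + t * N₀) ⊆ Finset.Icc (n + 1) (4 * n) := by
    intro j hj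
    rw [Finset.mem_Ico] at hj
    rw [Finset.mem_Icc]
    omega
  have hstep2 : ∑ k ∈ Finset.Ico (n+1) ((n+1) + t * N₀), ‖c (k : ℤ)‖ ≤
      ∑ k ∈ Finset.Icc (n+1) (4*n), ‖c (k : ℤ)‖ :=
    Finset.sum_le_sum_of_subset_of_nonneg hsub2 (fun _ _ _ => norm_nonneg _)
  have hstep1 : Real.cos θ₀ * ∑ k ∈ Finset.Icc (n+1) (4*n), ‖c (k : ℤ)‖ ≤
      ∑ k ∈ Finset.Icc (n+1) (4*n), (c (k : ℤ)).re := by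
    rw [Finset.mul_sum]
    apply Finset.sum_le_sum
    intro k hk
    rw [Finset.mem_Icc] at hk
    exact re_ge c θ₀ hθ₀ hθ₁ h4 k (by exact_mod_cast Nat.one_le_iff_ne_zero.mpr (by omega))
  have hchain : Real.cos θ₀ * ((t : ℝ) * B) ≤
      ∑ k ∈ Finset.Icc (n+1) (4*n), (c (k : ℤ)).re := by
    have := mul_le_mul_of_nonneg_left (hbsum.trans hstep2) hcos.le
    linarith
  have hfrac : (n : ℝ) / N₀ ≤ 2 * t := by
    rw [div_le_iff₀ (by exact_mod_cast hN₀pos)]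
    have : (n : ℝ) ≤ 2 * t * N₀ := by exact_mod_cast hn2t
    linarith
  have hfinal : (2 * (1 + M) / Real.cos θ₀)⁻¹ * ((n : ℝ) / N₀) *
      ‖c ((2 * n : ℕ) : ℤ)‖ ≤ Real.cos θ₀ * ((t : ℝ) * B) := by
    have habs : (0:ℝ) ≤ ‖c ((2 * n : ℕ) : ℤ)‖ := norm_nonneg _
    have hinvpos : (0:ℝ) ≤ (2 * (1 + M) / Real.cos θ₀)⁻¹ := by positivity
    have h1 := mul_le_mul_of_nonneg_right
      (mul_le_mul_of_nonneg_left hfrac hinvpos) habs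
    have heq : (2 * (1 + M) / Real.cos θ₀)⁻¹ * (2 * (t:ℝ)) *
        ‖c ((2 * n : ℕ) : ℤ)‖ = Real.cos θ₀ * ((t : ℝ) * B) := by
      rw [hB]
      field_simp
    linarith
  exact hfinal.trans hchain
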